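/- For probability measures u₁,…,uₙ on Ω ⊆ ℝ with finite second moments and barycentric weights λ₁,…,λₙ ≥ 0 summing to 1, the unique minimizer over v ∈ P₂(Ω) of ∑ᵢ λᵢ W₂(v,uᵢ)² has quantile function equal to ∑ᵢ λᵢ icdf_{uᵢ}. -/

import Mathlib

/-!
The quantile function `icdf μ` pushes Lebesgue measure on `(0, 1)` forward to `μ`, so
`s ↦ (icdf μ s, icdf ν s)` is a coupling of `μ` and `ν`, and it is optimal: in
`(x - y)² = (x - a)² + (y - a)² - 2 (x - a) (y - a)` only the cross term depends on the
coupling `π`; by Tonelli it equals `∫∫_{[a,∞)²} π((s,∞) × (t,∞)) ds dt`, and the integrand is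
at most `1 - max (F_μ s) (F_ν t)`, with equality for the quantile coupling (Hoeffding, Fréchet).
Hence `W₂(μ, ν)² = ‖icdf μ - icdf ν‖²` in `L²(0, 1)`, and there
`∑ λᵢ ‖q - icdf uᵢ‖² = ‖q - g‖² + ∑ λᵢ ‖g - icdf uᵢ‖²` for the mean `g = ∑ λᵢ icdf uᵢ`.
This mean is again nondecreasing and right-continuous, hence the quantile function of its
pushforward measure, which is therefore the unique minimizer.
-/

open MeasureTheory Set

noncomputable def cdf' (μ : Measure ℝ) (x : ℝ) : ℝ := (μ (Iic x)).toReal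

noncomputable def icdf (μ : Measure ℝ) (s : ℝ) : ℝ := sInf {x | s < cdf' μ x}

noncomputable def W2 (μ ν : Measure ℝ) : ℝ :=
  sInf {r | ∃ π : Measure (ℝ × ℝ), IsProbabilityMeasure π ∧
    π.map Prod.fst = μ ∧ π.map Prod.snd = ν ∧
    r = (∫ p, (p.1 - p.2) ^ 2 ∂π) ^ (1 / 2 : ℝ)}

def memP2 (xmin xmax : ℝ) (μ : Measure ℝ) : Prop :=
  IsProbabilityMeasure μ ∧ (∀ᵐ x ∂μ, x ∈ Icc xmin xmax) ∧ Integrable (fun x => x ^ 2) μ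

open Filter Topology ProbabilityTheory

local notation "𝕀" => volume.restrict (Ioo (0 : ℝ) 1)

lemma Real.volume_eq_of_Ioo_subset_of_subset_Icc {S : Set ℝ} {a b : ℝ}
    (h₁ : Ioo a b ⊆ S) (h₂ : S ⊆ Icc a b) : volume S = ENNReal.ofReal (b - a) :=
  le_antisymm (Real.volume_Icc ▸ measure_mono h₂) (Real.volume_Ioo ▸ measure_mono h₁)

section Quantile

variable {μ : Measure ℝ} {s x : ℝ}

lemma bddBelow_setOf_lt_cdf (hs : 0 < s) : BddBelow {x | s < cdf μ x} := by
  obtain ⟨x₀, hx₀⟩ := eventually_atBot.1 ((tendsto_cdf_atBot μ).eventually (gt_mem_nhds hs))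
  exact ⟨x₀, fun x hx => le_of_not_ge fun hle => (hx₀ x hle).not_gt hx⟩

lemma nonempty_setOf_lt_cdf (hs : s < 1) : {x | s < cdf μ x}.Nonempty :=
  ((tendsto_cdf_atTop μ).eventually (lt_mem_nhds hs)).exists

variable [IsProbabilityMeasure μ]

lemma cdf'_eq_cdf : cdf' μ = cdf μ := funext fun x => (cdf_eq_real μ x).symm

lemma icdf_eq_sInf : icdf μ s = sInf {x | s < cdf μ x} := by
  rw [icdf, cdf'_eq_cdf]

lemma icdf_le_of_lt_cdf (hs : 0 < s) (h : s < cdf μ x) : icdf μ s ≤ x :=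
  icdf_eq_sInf (μ := μ) ▸ csInf_le (bddBelow_setOf_lt_cdf hs) h

lemma cdf_le_of_lt_icdf (hs : 0 < s) (h : x < icdf μ s) : cdf μ x ≤ s :=
  le_of_not_gt fun h' => (icdf_le_of_lt_cdf hs h').not_gt h

lemma le_cdf_of_icdf_le (hs : s < 1) (h : icdf μ s ≤ x) : s ≤ cdf μ x := by
  refine ge_of_tendsto ((cdf μ).right_continuous x |>.mono Ioi_subset_Ici_self)
    (eventually_nhdsWithin_of_forall fun y (hy : x < y) => ?_)
  rw [icdf_eq_sInf] at h
  obtain ⟨z, hz, hzy⟩ := exists_lt_of_csInf_lt (nonempty_setOf_lt_cdf hs) (h.trans_lt hy)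
  exact hz.le.trans (monotone_cdf μ hzy.le)

lemma lt_icdf_of_cdf_lt (hs : s < 1) (h : cdf μ x < s) : x < icdf μ s :=
  lt_of_not_ge fun h' => (le_cdf_of_icdf_le hs h').not_gt h

lemma icdf_monotoneOn : MonotoneOn (icdf μ) (Ioo 0 1) := fun s hs t ht hst => by
  simp only [icdf_eq_sInf]
  exact csInf_le_csInf (bddBelow_setOf_lt_cdf hs.1) (nonempty_setOf_lt_cdf ht.2)
    fun x hx => hst.trans_lt hx

lemma aemeasurable_icdf : AEMeasurable (icdf μ) 𝕀 :=
  aemeasurable_restrict_of_monotoneOn measurableSet_Ioo icdf_monotoneOn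

lemma continuousWithinAt_icdf (hs : s ∈ Ioo 0 1) : ContinuousWithinAt (icdf μ) (Ici s) s := by
  refine tendsto_order.2 ⟨fun y hy => ?_, fun y hy => ?_⟩
  · filter_upwards [Ico_mem_nhdsGE hs.2] with t ht
    exact hy.trans_le (icdf_monotoneOn hs ⟨hs.1.trans_le ht.1, ht.2⟩ ht.1)
  · rw [icdf_eq_sInf] at hy
    obtain ⟨x, hx, hxy⟩ := exists_lt_of_csInf_lt (nonempty_setOf_lt_cdf hs.2) hy
    filter_upwards [Ico_mem_nhdsGE hx] with t ht
    exact (icdf_le_of_lt_cdf (hs.1.trans_le ht.1) ht.2).trans_lt hxy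

lemma map_icdf : Measure.map (icdf μ) 𝕀 = μ := by
  refine Measure.ext_of_Iic _ _ fun x => ?_
  rw [Measure.map_apply_of_aemeasurable aemeasurable_icdf measurableSet_Iic,
    Measure.restrict_apply' measurableSet_Ioo, ← ofReal_cdf, ← sub_zero (cdf μ x)]
  refine Real.volume_eq_of_Ioo_subset_of_subset_Icc (fun s hs => ?_) fun s hs => ?_
  · exact ⟨icdf_le_of_lt_cdf hs.1 hs.2, hs.1, hs.2.trans_le (cdf_le_one μ x)⟩
  · exact ⟨hs.2.1.le, le_cdf_of_icdf_le hs.2.2 hs.1⟩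

lemma icdf_mem_Icc {a b : ℝ} (h : ∀ᵐ x ∂μ, x ∈ Icc a b) (hs : s ∈ Ioo 0 1) :
    icdf μ s ∈ Icc a b := by
  have hnull : μ {x | x ∉ Icc a b} = 0 := ae_iff.1 h
  have hb : cdf μ b = 1 := by
    have : μ (Iic b)ᶜ = 0 :=
      measure_mono_null (fun x (hx : ¬x ≤ b) (hx' : x ∈ Icc a b) => hx hx'.2) hnull
    rw [cdf_eq_real, measureReal_def, (prob_compl_eq_zero_iff measurableSet_Iic).1 this,
      ENNReal.toReal_one]
  refine ⟨?_, icdf_le_of_lt_cdf hs.1 (hb ▸ hs.2)⟩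
  rw [icdf_eq_sInf]
  refine le_csInf (nonempty_setOf_lt_cdf hs.2) fun x (hx : s < cdf μ x) =>
    le_of_not_gt fun hxa => ?_
  have : μ (Iic x) = 0 := measure_mono_null
    (fun y (hy : y ≤ x) (hy' : y ∈ Icc a b) => (hy.trans_lt hxa).not_ge hy'.1) hnull
  rw [cdf_eq_real, measureReal_def, this, ENNReal.toReal_zero] at hx
  exact hs.1.not_gt hx

end Quantile

lemma eq_of_icdf_ae_eq {μ ν : Measure ℝ} [IsProbabilityMeasure μ] [IsProbabilityMeasure ν]
    (h : icdf μ =ᵐ[𝕀] icdf ν) : μ = ν := by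
  rw [← map_icdf (μ := μ), ← map_icdf (μ := ν), Measure.map_congr h]

instance : IsProbabilityMeasure 𝕀 := ⟨by simp⟩

lemma icdf_map_of_monotoneOn {g : ℝ → ℝ} (hmono : MonotoneOn g (Ioo 0 1))
    (hcont : ∀ t ∈ Ioo 0 1, ContinuousWithinAt g (Ici t) t) {t : ℝ} (ht : t ∈ Ioo 0 1) :
    icdf (Measure.map g 𝕀) t = g t := by
  have hg : AEMeasurable g 𝕀 := aemeasurable_restrict_of_monotoneOn measurableSet_Ioo hmono
  have : IsProbabilityMeasure (Measure.map g 𝕀) := Measure.isProbabilityMeasure_map hg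
  have hcdf (x : ℝ) :
      ENNReal.ofReal (cdf (Measure.map g 𝕀) x) = volume ({s | g s ≤ x} ∩ Ioo 0 1) := by
    rw [ofReal_cdf, Measure.map_apply_of_aemeasurable hg measurableSet_Iic,
      Measure.restrict_apply' measurableSet_Ioo]
    rfl
  have hle_cdf {s : ℝ} (hs : s ∈ Ioo 0 1) : s ≤ cdf (Measure.map g 𝕀) (g s) := by
    rw [← ENNReal.ofReal_le_ofReal_iff (cdf_nonneg _ _), hcdf]
    calc ENNReal.ofReal s = volume (Ioo 0 s) := by rw [Real.volume_Ioo, sub_zero]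
      _ ≤ volume ({r | g r ≤ g s} ∩ Ioo 0 1) := measure_mono fun r hr =>
        ⟨hmono ⟨hr.1, hr.2.trans hs.2⟩ hs hr.2.le, hr.1, hr.2.trans hs.2⟩
  rw [icdf_eq_sInf]
  refine le_antisymm ?_
    (le_csInf (nonempty_setOf_lt_cdf ht.2) fun x hx => le_of_not_gt fun hxt => ?_)
  · refine ge_of_tendsto ((hcont t ht).mono Ioi_subset_Ici_self) ?_
    filter_upwards [Ioo_mem_nhdsGT ht.2] with s hs
    exact csInf_le (bddBelow_setOf_lt_cdf ht.1) (hs.1.trans_le (hle_cdf ⟨ht.1.trans hs.1, hs.2⟩))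
  · refine hx.not_ge ((ENNReal.ofReal_le_ofReal_iff ht.1.le).1 ?_)
    calc ENNReal.ofReal (cdf (Measure.map g 𝕀) x) = volume ({s | g s ≤ x} ∩ Ioo 0 1) := hcdf x
      _ ≤ volume (Ioc 0 t) := measure_mono fun r hr => ⟨hr.2.1, le_of_not_gt fun htr =>
          (hxt.trans_le (hmono ht ⟨ht.1.trans htr, hr.2.2⟩ htr.le)).not_ge hr.1⟩
      _ = ENNReal.ofReal t := by rw [Real.volume_Ioc, sub_zero]

lemma integrable_of_ae_mem_of_isCompact {X : Type*} [TopologicalSpace X] [T2Space X]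
    [MeasurableSpace X] [OpensMeasurableSpace X] {π : Measure X} [IsFiniteMeasure π] {K : Set X}
    (hK : IsCompact K) (h : ∀ᵐ x ∂π, x ∈ K) {f : X → ℝ} (hf : Continuous f) : Integrable f π := by
  rw [← Measure.restrict_eq_self_of_ae_mem h]
  exact hf.continuousOn.integrableOn_compact hK

lemma measure_Ioi_eq_ofReal_one_sub_cdf {μ : Measure ℝ} [IsProbabilityMeasure μ] (x : ℝ) :
    μ (Ioi x) = ENNReal.ofReal (1 - cdf μ x) := by
  rw [ENNReal.ofReal_sub _ (cdf_nonneg μ x), ENNReal.ofReal_one, ofReal_cdf, ← compl_Iic,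
    prob_compl_eq_one_sub measurableSet_Iic]

lemma measure_Ioi_prod_Ioi_le {μ ν : Measure ℝ} [IsProbabilityMeasure μ] [IsProbabilityMeasure ν]
    {π : Measure (ℝ × ℝ)} (h₁ : π.map Prod.fst = μ) (h₂ : π.map Prod.snd = ν) (x y : ℝ) :
    π (Ioi x ×ˢ Ioi y) ≤ ENNReal.ofReal (1 - max (cdf μ x) (cdf ν y)) := by
  rw [← min_sub_sub_left, ENNReal.ofReal_min, ← measure_Ioi_eq_ofReal_one_sub_cdf,
    ← measure_Ioi_eq_ofReal_one_sub_cdf, ← h₁, ← h₂,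
    Measure.map_apply measurable_fst measurableSet_Ioi,
    Measure.map_apply measurable_snd measurableSet_Ioi]
  exact le_min (measure_mono fun p hp => hp.1) (measure_mono fun p hp => hp.2)

lemma lintegral_ofReal_mul_sub_eq {π : Measure (ℝ × ℝ)} [SFinite π] {a : ℝ}
    (h : ∀ᵐ p ∂π, a ≤ p.1 ∧ a ≤ p.2) :
    ∫⁻ p, ENNReal.ofReal ((p.1 - a) * (p.2 - a)) ∂π =
      ∫⁻ q in Ici a ×ˢ Ici a, π (Ioi q.1 ×ˢ Ioi q.2) := by
  set S := {z : (ℝ × ℝ) × (ℝ × ℝ) | z.2.1 < z.1.1} ∩ {z | z.2.2 < z.1.2}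
  have hS : MeasurableSet S := (measurableSet_lt measurable_snd.fst measurable_fst.fst).inter
    (measurableSet_lt measurable_snd.snd measurable_fst.snd)
  calc ∫⁻ p, ENNReal.ofReal ((p.1 - a) * (p.2 - a)) ∂π
      = ∫⁻ p, (∫⁻ q in Ici a ×ˢ Ici a, S.indicator 1 (p, q)) ∂π := by
        refine lintegral_congr_ae ?_
        filter_upwards [h] with p hp
        -- `(x - a) (y - a)` is the area of `[a, x) × [a, y)`
        change _ = ∫⁻ q in Ici a ×ˢ Ici a, (Iio p.1 ×ˢ Iio p.2).indicator 1 q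
        rw [lintegral_indicator_one (measurableSet_Iio.prod measurableSet_Iio),
          Measure.restrict_apply (measurableSet_Iio.prod measurableSet_Iio), prod_inter_prod,
          Iio_inter_Ici, Iio_inter_Ici, Measure.volume_eq_prod, Measure.prod_prod,
          Real.volume_Ico, Real.volume_Ico, ENNReal.ofReal_mul (sub_nonneg.2 hp.1)]
    _ = ∫⁻ q in Ici a ×ˢ Ici a, ∫⁻ p, S.indicator 1 (p, q) ∂π :=
        lintegral_lintegral_swap (f := fun p q => S.indicator 1 (p, q))
          (measurable_one.indicator hS).aemeasurable
    _ = ∫⁻ q in Ici a ×ˢ Ici a, π (Ioi q.1 ×ˢ Ioi q.2) := by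
        refine lintegral_congr fun q => ?_
        change ∫⁻ p, (Ioi q.1 ×ˢ Ioi q.2).indicator 1 p ∂π = _
        rw [lintegral_indicator_one (measurableSet_Ioi.prod measurableSet_Ioi)]

noncomputable def quantileCoupling (μ ν : Measure ℝ) : Measure (ℝ × ℝ) :=
  Measure.map (fun s => (icdf μ s, icdf ν s)) 𝕀

section QuantileCoupling

variable {μ ν : Measure ℝ} [IsProbabilityMeasure μ] [IsProbabilityMeasure ν]

lemma aemeasurable_icdf_prodMk : AEMeasurable (fun s => (icdf μ s, icdf ν s)) 𝕀 :=
  aemeasurable_icdf.prodMk aemeasurable_icdf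

instance : IsProbabilityMeasure (quantileCoupling μ ν) :=
  Measure.isProbabilityMeasure_map aemeasurable_icdf_prodMk

lemma map_fst_quantileCoupling : (quantileCoupling μ ν).map Prod.fst = μ := by
  rw [quantileCoupling, AEMeasurable.map_map_of_aemeasurable measurable_fst.aemeasurable
    aemeasurable_icdf_prodMk]
  exact map_icdf

lemma map_snd_quantileCoupling : (quantileCoupling μ ν).map Prod.snd = ν := by
  rw [quantileCoupling, AEMeasurable.map_map_of_aemeasurable measurable_snd.aemeasurable
    aemeasurable_icdf_prodMk]
  exact map_icdf

lemma quantileCoupling_Ioi_prod_Ioi (x y : ℝ) :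
    quantileCoupling μ ν (Ioi x ×ˢ Ioi y) = ENNReal.ofReal (1 - max (cdf μ x) (cdf ν y)) := by
  rw [quantileCoupling, Measure.map_apply_of_aemeasurable aemeasurable_icdf_prodMk
    (measurableSet_Ioi.prod measurableSet_Ioi), Measure.restrict_apply' measurableSet_Ioo]
  refine Real.volume_eq_of_Ioo_subset_of_subset_Icc (fun s hs => ?_) fun s hs => ?_
  · have hs₀ : 0 < s := ((cdf_nonneg μ x).trans (le_max_left _ _)).trans_lt hs.1
    exact ⟨⟨lt_icdf_of_cdf_lt hs.2 ((le_max_left _ _).trans_lt hs.1),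
      lt_icdf_of_cdf_lt hs.2 ((le_max_right _ _).trans_lt hs.1)⟩, hs₀, hs.2⟩
  · exact ⟨max_le (cdf_le_of_lt_icdf hs.2.1 hs.1.1) (cdf_le_of_lt_icdf hs.2.1 hs.1.2), hs.2.2.le⟩

end QuantileCoupling

section W2

variable {a b : ℝ} {μ ν : Measure ℝ}

lemma ae_mem_Icc_prod_of_map {π : Measure (ℝ × ℝ)} (h₁ : π.map Prod.fst = μ)
    (h₂ : π.map Prod.snd = ν) (hμ : ∀ᵐ x ∂μ, x ∈ Icc a b) (hν : ∀ᵐ x ∂ν, x ∈ Icc a b) :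
    ∀ᵐ p ∂π, p ∈ Icc a b ×ˢ Icc a b := by
  rw [← h₁] at hμ
  rw [← h₂] at hν
  filter_upwards [ae_of_ae_map measurable_fst.aemeasurable hμ,
    ae_of_ae_map measurable_snd.aemeasurable hν] with p hp₁ hp₂
  exact ⟨hp₁, hp₂⟩

lemma integral_sq_sub_eq {π : Measure (ℝ × ℝ)} [IsFiniteMeasure π] (hμ : ∀ᵐ x ∂μ, x ∈ Icc a b)
    (hν : ∀ᵐ x ∂ν, x ∈ Icc a b) (h₁ : π.map Prod.fst = μ) (h₂ : π.map Prod.snd = ν) :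
    ∫ p, (p.1 - p.2) ^ 2 ∂π =
      ∫ x, (x - a) ^ 2 ∂μ + ∫ y, (y - a) ^ 2 ∂ν - 2 * ∫ p, (p.1 - a) * (p.2 - a) ∂π := by
  have hint {f : ℝ × ℝ → ℝ} (hf : Continuous f) : Integrable f π :=
    integrable_of_ae_mem_of_isCompact (isCompact_Icc.prod isCompact_Icc)
      (ae_mem_Icc_prod_of_map h₁ h₂ hμ hν) hf
  have hsq (p : ℝ × ℝ) :
      (p.1 - p.2) ^ 2 = (p.1 - a) ^ 2 + (p.2 - a) ^ 2 - 2 * ((p.1 - a) * (p.2 - a)) := by ring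
  simp_rw [hsq]
  rw [integral_sub (hint (by fun_prop)) (hint (by fun_prop)),
    integral_add (hint (by fun_prop)) (hint (by fun_prop)), integral_const_mul, ← h₁, ← h₂,
    integral_map measurable_fst.aemeasurable (by fun_prop),
    integral_map measurable_snd.aemeasurable (by fun_prop)]

variable [IsProbabilityMeasure μ] [IsProbabilityMeasure ν] {π : Measure (ℝ × ℝ)}

lemma integral_mul_sub_le_quantileCoupling (hμ : ∀ᵐ x ∂μ, x ∈ Icc a b)
    (hν : ∀ᵐ x ∂ν, x ∈ Icc a b) [IsProbabilityMeasure π] (h₁ : π.map Prod.fst = μ)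
    (h₂ : π.map Prod.snd = ν) :
    ∫ p, (p.1 - a) * (p.2 - a) ∂π ≤ ∫ p, (p.1 - a) * (p.2 - a) ∂quantileCoupling μ ν := by
  have hπ := ae_mem_Icc_prod_of_map h₁ h₂ hμ hν
  have hq := ae_mem_Icc_prod_of_map map_fst_quantileCoupling map_snd_quantileCoupling hμ hν
  have hf : Continuous fun p : ℝ × ℝ => (p.1 - a) * (p.2 - a) := by fun_prop
  have hnonneg {ρ : Measure (ℝ × ℝ)} (hρ : ∀ᵐ p ∂ρ, p ∈ Icc a b ×ˢ Icc a b) :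
      0 ≤ᵐ[ρ] fun p => (p.1 - a) * (p.2 - a) :=
    hρ.mono fun p hp => mul_nonneg (sub_nonneg.2 hp.1.1) (sub_nonneg.2 hp.2.1)
  have hge {ρ : Measure (ℝ × ℝ)} (hρ : ∀ᵐ p ∂ρ, p ∈ Icc a b ×ˢ Icc a b) :
      ∀ᵐ p ∂ρ, a ≤ p.1 ∧ a ≤ p.2 :=
    hρ.mono fun p hp => ⟨hp.1.1, hp.2.1⟩
  have hfin :=
    (integrable_of_ae_mem_of_isCompact (isCompact_Icc.prod isCompact_Icc) hq hf).lintegral_lt_top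
  rw [integral_eq_lintegral_of_nonneg_ae (hnonneg hπ) hf.aestronglyMeasurable,
    integral_eq_lintegral_of_nonneg_ae (hnonneg hq) hf.aestronglyMeasurable]
  refine ENNReal.toReal_mono hfin.ne ?_
  rw [lintegral_ofReal_mul_sub_eq (hge hπ), lintegral_ofReal_mul_sub_eq (hge hq)]
  refine lintegral_mono fun q => ?_
  rw [quantileCoupling_Ioi_prod_Ioi]
  exact measure_Ioi_prod_Ioi_le h₁ h₂ _ _

lemma integral_sq_sub_quantileCoupling_le (hμ : ∀ᵐ x ∂μ, x ∈ Icc a b)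
    (hν : ∀ᵐ x ∂ν, x ∈ Icc a b) [IsProbabilityMeasure π] (h₁ : π.map Prod.fst = μ)
    (h₂ : π.map Prod.snd = ν) :
    ∫ p, (p.1 - p.2) ^ 2 ∂quantileCoupling μ ν ≤ ∫ p, (p.1 - p.2) ^ 2 ∂π := by
  rw [integral_sq_sub_eq hμ hν h₁ h₂,
    integral_sq_sub_eq hμ hν map_fst_quantileCoupling map_snd_quantileCoupling]
  linarith [integral_mul_sub_le_quantileCoupling hμ hν h₁ h₂]

lemma W2_sq_eq (hμ : ∀ᵐ x ∂μ, x ∈ Icc a b) (hν : ∀ᵐ x ∂ν, x ∈ Icc a b) :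
    W2 μ ν ^ 2 = ∫ s in Ioo 0 1, (icdf μ s - icdf ν s) ^ 2 := by
  have hleast : IsLeast {r | ∃ π : Measure (ℝ × ℝ), IsProbabilityMeasure π ∧
      π.map Prod.fst = μ ∧ π.map Prod.snd = ν ∧ r = (∫ p, (p.1 - p.2) ^ 2 ∂π) ^ (1 / 2 : ℝ)}
      ((∫ p, (p.1 - p.2) ^ 2 ∂quantileCoupling μ ν) ^ (1 / 2 : ℝ)) := by
    refine ⟨⟨_, inferInstance, map_fst_quantileCoupling, map_snd_quantileCoupling, rfl⟩, ?_⟩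
    rintro r ⟨π, hπ, h₁, h₂, rfl⟩
    exact Real.rpow_le_rpow (integral_nonneg fun _ => sq_nonneg _)
      (integral_sq_sub_quantileCoupling_le hμ hν h₁ h₂) (by norm_num)
  rw [W2, hleast.csInf_eq, ← Real.sqrt_eq_rpow,
    Real.sq_sqrt (integral_nonneg fun _ => sq_nonneg _), quantileCoupling,
    integral_map aemeasurable_icdf_prodMk
      (by fun_prop : Continuous fun p : ℝ × ℝ => (p.1 - p.2) ^ 2).aestronglyMeasurable]

end W2

lemma integrable_sq_sub_icdf {a b : ℝ} {μ ν : Measure ℝ} [IsProbabilityMeasure μ]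
    [IsProbabilityMeasure ν] (hμ : ∀ᵐ x ∂μ, x ∈ Icc a b) (hν : ∀ᵐ x ∂ν, x ∈ Icc a b) :
    Integrable (fun s => (icdf μ s - icdf ν s) ^ 2) 𝕀 := by
  have hf : Continuous fun p : ℝ × ℝ => (p.1 - p.2) ^ 2 := by fun_prop
  refine (integrable_map_measure hf.aestronglyMeasurable aemeasurable_icdf_prodMk).1 ?_
  exact integrable_of_ae_mem_of_isCompact (isCompact_Icc.prod isCompact_Icc)
    (ae_mem_Icc_prod_of_map map_fst_quantileCoupling map_snd_quantileCoupling hμ hν) hf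

lemma eq_of_W2_eq_zero {a b : ℝ} {μ ν : Measure ℝ} [IsProbabilityMeasure μ]
    [IsProbabilityMeasure ν] (hμ : ∀ᵐ x ∂μ, x ∈ Icc a b) (hν : ∀ᵐ x ∂ν, x ∈ Icc a b)
    (h : W2 μ ν = 0) : μ = ν := by
  have h₂ : W2 μ ν ^ 2 = 0 := by rw [h, zero_pow two_ne_zero]
  rw [W2_sq_eq hμ hν,
    integral_eq_zero_iff_of_nonneg (fun _ => sq_nonneg _) (integrable_sq_sub_icdf hμ hν)] at h₂
  exact eq_of_icdf_ae_eq
    (h₂.mono fun s hs => sub_eq_zero.1 (pow_eq_zero_iff two_ne_zero |>.1 hs))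

lemma Finset.sum_mul_sq_sub_eq {ι R : Type*} [CommRing R] (s : Finset ι) {w y : ι → R}
    (hw : ∑ i ∈ s, w i = 1) (x : R) :
    ∑ i ∈ s, w i * (x - y i) ^ 2 =
      (x - ∑ j ∈ s, w j * y j) ^ 2 + ∑ i ∈ s, w i * (∑ j ∈ s, w j * y j - y i) ^ 2 := by
  set m := ∑ j ∈ s, w j * y j
  have hdev : ∑ i ∈ s, w i * (m - y i) = 0 := by
    rw [Finset.sum_congr rfl fun i _ => mul_sub (w i) m (y i), Finset.sum_sub_distrib,
      ← Finset.sum_mul, hw, one_mul, sub_self]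
  calc ∑ i ∈ s, w i * (x - y i) ^ 2
      = ∑ i ∈ s, (w i * (m - y i) ^ 2 + (x - m) ^ 2 * w i + 2 * (x - m) * (w i * (m - y i))) :=
        Finset.sum_congr rfl fun i _ => by ring
    _ = (x - m) ^ 2 + ∑ i ∈ s, w i * (m - y i) ^ 2 := by
        rw [Finset.sum_add_distrib, Finset.sum_add_distrib, ← Finset.mul_sum, ← Finset.mul_sum,
          hw, hdev]
        ring

noncomputable def barycenter {ι : Type*} [Fintype ι] (u : ι → Measure ℝ) (lam : ι → ℝ) :
    Measure ℝ :=
  Measure.map (fun s => ∑ i, lam i * icdf (u i) s) 𝕀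

section Barycenter

variable {ι : Type*} [Fintype ι] {u : ι → Measure ℝ} [∀ i, IsProbabilityMeasure (u i)]
  {lam : ι → ℝ}

lemma monotoneOn_sum_mul_icdf (hl : ∀ i, 0 ≤ lam i) :
    MonotoneOn (fun s => ∑ i, lam i * icdf (u i) s) (Ioo 0 1) := fun _ hs _ ht hst =>
  Finset.sum_le_sum fun i _ => mul_le_mul_of_nonneg_left (icdf_monotoneOn hs ht hst) (hl i)

lemma aemeasurable_sum_mul_icdf : AEMeasurable (fun s => ∑ i, lam i * icdf (u i) s) 𝕀 :=
  Finset.aemeasurable_fun_sum _ fun i _ => aemeasurable_icdf.const_mul (lam i)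

instance : IsProbabilityMeasure (barycenter u lam) :=
  Measure.isProbabilityMeasure_map aemeasurable_sum_mul_icdf

lemma icdf_barycenter (hl : ∀ i, 0 ≤ lam i) {s : ℝ} (hs : s ∈ Ioo 0 1) :
    icdf (barycenter u lam) s = ∑ i, lam i * icdf (u i) s :=
  icdf_map_of_monotoneOn (monotoneOn_sum_mul_icdf hl)
    (fun _ ht => tendsto_finsetSum _ fun i _ => (continuousWithinAt_icdf ht).const_mul (lam i))
    hs

lemma ae_mem_Icc_barycenter {a b : ℝ} (hu : ∀ i, ∀ᵐ x ∂u i, x ∈ Icc a b) (hl : ∀ i, 0 ≤ lam i)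
    (hsum : ∑ i, lam i = 1) : ∀ᵐ x ∂barycenter u lam, x ∈ Icc a b := by
  refine (ae_map_iff aemeasurable_sum_mul_icdf measurableSet_Icc).2 ?_
  exact (ae_restrict_iff' measurableSet_Ioo).2 (ae_of_all _ fun s hs =>
    (convex_Icc a b).sum_mem (fun i _ => hl i) hsum fun i _ => icdf_mem_Icc (hu i) hs)

lemma sum_mul_W2_sq_eq_integral {a b : ℝ} (hu : ∀ i, ∀ᵐ x ∂u i, x ∈ Icc a b) {w : Measure ℝ}
    [IsProbabilityMeasure w] (hw : ∀ᵐ x ∂w, x ∈ Icc a b) :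
    ∑ i, lam i * W2 w (u i) ^ 2 =
      ∫ s in Ioo 0 1, ∑ i, lam i * (icdf w s - icdf (u i) s) ^ 2 := by
  rw [integral_finsetSum _ fun i _ => (integrable_sq_sub_icdf hw (hu i)).const_mul (lam i)]
  simp only [W2_sq_eq hw (hu _), integral_const_mul]

lemma sum_mul_W2_sq_eq_W2_sq_barycenter_add {a b : ℝ} (hu : ∀ i, ∀ᵐ x ∂u i, x ∈ Icc a b)
    (hl : ∀ i, 0 ≤ lam i) (hsum : ∑ i, lam i = 1) {w : Measure ℝ} [IsProbabilityMeasure w]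
    (hw : ∀ᵐ x ∂w, x ∈ Icc a b) :
    ∑ i, lam i * W2 w (u i) ^ 2 =
      W2 w (barycenter u lam) ^ 2 + ∑ i, lam i * W2 (barycenter u lam) (u i) ^ 2 := by
  have hv := ae_mem_Icc_barycenter hu hl hsum
  rw [sum_mul_W2_sq_eq_integral hu hw, sum_mul_W2_sq_eq_integral hu hv, W2_sq_eq hw hv,
    ← integral_add (integrable_sq_sub_icdf hw hv)
      (integrable_finsetSum _ fun i _ => (integrable_sq_sub_icdf hv (hu i)).const_mul (lam i))]
  refine setIntegral_congr_fun measurableSet_Ioo fun s hs => ?_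
  simp only [icdf_barycenter hl hs]
  exact Finset.sum_mul_sq_sub_eq _ hsum _

end Barycenter

lemma memP2_of_ae_mem_Icc {a b : ℝ} {μ : Measure ℝ} [IsProbabilityMeasure μ]
    (h : ∀ᵐ x ∂μ, x ∈ Icc a b) : memP2 a b μ :=
  ⟨inferInstance, h, integrable_of_ae_mem_of_isCompact isCompact_Icc h (continuous_pow 2)⟩

theorem stmt4_general (xmin xmax : ℝ) (n : ℕ)
    (u : Fin n → Measure ℝ) (hu : ∀ i, memP2 xmin xmax (u i))
    (lam : Fin n → ℝ) (hl : ∀ i, 0 ≤ lam i) (hsum : ∑ i, lam i = 1) :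
    ∃ v : Measure ℝ, memP2 xmin xmax v ∧
      (∀ v', memP2 xmin xmax v' →
        ∑ i, lam i * (W2 v (u i)) ^ 2 ≤ ∑ i, lam i * (W2 v' (u i)) ^ 2) ∧
      (∀ v', memP2 xmin xmax v' →
        (∀ v'', memP2 xmin xmax v'' →
          ∑ i, lam i * (W2 v' (u i)) ^ 2 ≤ ∑ i, lam i * (W2 v'' (u i)) ^ 2) → v' = v) ∧
      (∀ s ∈ Ioo (0 : ℝ) 1, icdf v s = ∑ i, lam i * icdf (u i) s) := by
  have : ∀ i, IsProbabilityMeasure (u i) := fun i => (hu i).1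
  have hsupp : ∀ i, ∀ᵐ x ∂u i, x ∈ Icc xmin xmax := fun i => (hu i).2.1
  have hv := ae_mem_Icc_barycenter hsupp hl hsum
  have hdecomp (w : Measure ℝ) (hw : memP2 xmin xmax w) :=
    have := hw.1
    sum_mul_W2_sq_eq_W2_sq_barycenter_add hsupp hl hsum hw.2.1
  refine ⟨barycenter u lam, memP2_of_ae_mem_Icc hv, fun w hw => ?_, fun w hw hmin => ?_,
    fun s hs => icdf_barycenter hl hs⟩
  · rw [hdecomp w hw]
    linarith [sq_nonneg (W2 w (barycenter u lam))]
  · have := hw.1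
    have hmin := hmin _ (memP2_of_ae_mem_Icc hv)
    rw [hdecomp w hw] at hmin
    refine eq_of_W2_eq_zero hw.2.1 hv (pow_eq_zero_iff two_ne_zero |>.1 ?_)
    linarith [sq_nonneg (W2 w (barycenter u lam))]

/-- The Wasserstein barycenter of u₁,…,uₙ with weights λ₁,…,λₙ exists, is the unique
minimizer of v ↦ ∑ᵢ λᵢ W₂(v,uᵢ)², and its quantile function is ∑ᵢ λᵢ icdf_{uᵢ}. -/
theorem stmt4 (xmin xmax : ℝ) (hx : xmin < xmax) (n : ℕ) (hn : 0 < n)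
    (u : Fin n → Measure ℝ) (hu : ∀ i, memP2 xmin xmax (u i))
    (lam : Fin n → ℝ) (hl : ∀ i, 0 ≤ lam i) (hsum : ∑ i, lam i = 1) :
    ∃ v : Measure ℝ, memP2 xmin xmax v ∧
      (∀ v', memP2 xmin xmax v' →
        ∑ i, lam i * (W2 v (u i)) ^ 2 ≤ ∑ i, lam i * (W2 v' (u i)) ^ 2) ∧
      (∀ v', memP2 xmin xmax v' →
        (∀ v'', memP2 xmin xmax v'' →
          ∑ i, lam i * (W2 v' (u i)) ^ 2 ≤ ∑ i, lam i * (W2 v'' (u i)) ^ 2) → v' = v) ∧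
      (∀ s ∈ Ioo (0 : ℝ) 1, icdf v s = ∑ i, lam i * icdf (u i) s) :=
  stmt4_general xmin xmax n u hu lam hl hsum
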